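/- arXiv:2202.01345 — 3 statements merged into one kernel-verified Lean document; each statement's English description precedes it below -/
import Mathlib

section
/- For every m ∈ 𝓜, every x ≥ 0 and every integer d ≥ 0 one has ((s•m•)^d s)(x) ≤ x·E^d_m(0;x); moreover for every integer d ≥ 1 one has ((m•(s•m•)^{d−1}) s)(x) ≤ E^d_m(0;x). -/
open MeasureTheory Filter Topology Set
open scoped ENNReal NNReal

structure MString where
  m : ℝ → ℝ
  strict_mono : StrictMonoOn m (Set.Ioi 0)
  right_cont : ∀ x : ℝ, 0 < x → ContinuousWithinAt m (Set.Ici x) x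
  μ : Measure ℝ
  stieltjes : ∀ a b : ℝ, 0 < a → a ≤ b → μ (Set.Ioc a b) = ENNReal.ofReal (m b - m a)
  int_fin : ∫⁻ x in Set.Ioc (0:ℝ) 1, ENNReal.ofReal x ∂μ < ⊤

namespace MString

noncomputable def F (S : MString) (x : ℝ) : ℝ := ∫ y in Set.Ioc (0:ℝ) x, y ∂S.μ

noncomputable def E (S : MString) (d : ℕ) (lam x : ℝ) : ℝ :=
  (1 / (d.factorial : ℝ)) * (S.F x) ^ d * Real.exp (lam * S.F x)

noncomputable def sBul (f : ℝ → ℝ) (x : ℝ) : ℝ := ∫ y in (0:ℝ)..x, f y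

noncomputable def mBul (S : MString) (f : ℝ → ℝ) (x : ℝ) : ℝ :=
  ∫ y in Set.Ioc (0:ℝ) x, f y ∂S.μ

noncomputable def smIter (S : MString) : ℕ → (ℝ → ℝ) → ℝ → ℝ
  | 0, f => f
  | (k+1), f => sBul (mBul S (smIter S k f))

noncomputable def msIter (S : MString) : ℕ → (ℝ → ℝ) → ℝ → ℝ
  | 0, f => f
  | (k+1), f => mBul S (sBul (msIter S k f))

noncomputable def psi (S : MString) (lam x : ℝ) : ℝ :=
  ∑' k : ℕ, lam ^ k * smIter S k id x

noncomputable def psiPlus (S : MString) (lam x : ℝ) : ℝ :=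
  1 + ∑' k : ℕ, lam ^ (k + 1) * mBul S (smIter S k id) x

noncomputable def g (S : MString) (lam x : ℝ) : ℝ :=
  psi S lam x * ∫ y in Set.Ioi x, (psi S lam y ^ 2)⁻¹

noncomputable def mtilde (S : MString) (x : ℝ) : ℝ := S.m x - S.m 1

noncomputable def jInt (S : MString) (f : ℝ → ℝ) (y : ℝ) : ℝ :=
  if y ≤ 1 then ∫ z in Set.Ioc y 1, f z ∂S.μ else - ∫ z in Set.Ioc 1 y, f z ∂S.μ

noncomputable def G (S : MString) : ℕ → ℝ → ℝ
  | 0 => fun _ => 0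
  | 1 => fun x => ∫ y in (0:ℝ)..x, mtilde S y
  | (k+2) => fun x => - ∫ y in (0:ℝ)..x, jInt S (G S (k+1)) y

noncomputable def GBig (S : MString) (x : ℝ) : ℝ := ∫ y in (0:ℝ)..x, S.m y

noncomputable def intGdm (S : MString) (k : ℕ) : ℝ≥0∞ :=
  ∫⁻ x in Set.Ioc (0:ℝ) 1, ENNReal.ofReal ((-1 : ℝ) ^ k * G S k x) ∂S.μ

open scoped Classical in
noncomputable def dIdx (S : MString) : ℕ∞ :=
  if BddBelow (S.m '' Set.Ioc (0:ℝ) 1) then 0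
  else sInf {n : ℕ∞ | ∃ k : ℕ, n = (k : ℕ∞) ∧ 1 ≤ k ∧ intGdm S k < ⊤}

noncomputable def phi (S : MString) (d : ℕ) (lam x : ℝ) : ℝ :=
  1 + (∑ k ∈ Finset.Icc 1 d, lam ^ k * G S k x)
    + ∑' k : ℕ, lam ^ (d + k + 1) * smIter S (k + 1) (G S d) x

noncomputable def c (S : MString) (d : ℕ) (lam : ℝ) : ℝ :=
  (phi S d lam 1 - g S lam 1) / psi S lam 1

noncomputable def Sd (S : MString) (d : ℕ) (x : ℝ) : ℝ :=
  sSup ((fun y => |mBul S (G S d) y|) '' Set.Icc 0 x)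

end MString

open scoped Nat

/-!
Let `ν = y dm(y)`, so that `F x = ν (0, x]`, and let `FLeft x = ν (0, x)` be its left limit.
By induction on `d`, `d! · ((s•m•)^d s)(y) ≤ y · FLeft(y)^d`. The `m•`-step rests on
`(k + 1) ∫_{(0,x]} ν(0,y)^k dν(y) ≤ ν(0,x]^(k+1)`, which holds for an arbitrary measure by
symmetrization; with `F` in place of `FLeft` it would fail at atoms of `ν`. The `s•`-step only
needs `F z ≤ FLeft y` for `z < y`.
-/

namespace MeasureTheory

variable {α : Type*} [MeasurableSpace α] [TopologicalSpace α] [LinearOrder α]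
  [OrderClosedTopology α] [SecondCountableTopology α] [OpensMeasurableSpace α]

theorem measurableSet_setOf_forall_ne_lt {ι : Type*} [Countable ι] (i : ι) :
    MeasurableSet {w : ι → α | ∀ j ≠ i, w j < w i} := by
  simp only [ofPred_forall]
  exact .iInter fun j ↦ .iInter fun _ ↦
    measurableSet_lt (measurable_pi_apply j) (measurable_pi_apply i)

theorem Measure.pi_setOf_forall_ne_lt (ν : Measure α) [SigmaFinite ν] {k : ℕ} (i : Fin (k + 1)) :
    Measure.pi (fun _ ↦ ν) {w | ∀ j ≠ i, w j < w i} = ∫⁻ y, ν (Iio y) ^ k ∂ν := by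
  have hB : MeasurableSet {p : α × (Fin k → α) | ∀ j, p.2 j < p.1} := by
    simp only [ofPred_forall]
    exact .iInter fun j ↦
      measurableSet_lt ((measurable_pi_apply j).comp measurable_snd) measurable_fst
  have hpre : MeasurableEquiv.piFinSuccAbove (fun _ ↦ α) i ⁻¹' {p | ∀ j, p.2 j < p.1} =
      {w | ∀ j ≠ i, w j < w i} := by
    ext w
    simp [i.forall_iff_succAbove, Fin.succAbove_ne, Fin.removeNth]
  rw [← hpre, (measurePreserving_piFinSuccAbove (fun _ ↦ ν) i).measure_preimage
    hB.nullMeasurableSet, Measure.prod_apply hB]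
  refine lintegral_congr fun y ↦ ?_
  have hslice : Prod.mk y ⁻¹' {p : α × (Fin k → α) | ∀ j, p.2 j < p.1} = univ.pi fun _ ↦ Iio y := by
    ext; simp
  simp [hslice, Measure.pi_pi]

/-- In `ν ^ (k + 1)` the events "coordinate `i` is the strict maximum" are disjoint, and each has
measure `∫ ν (Iio y) ^ k ∂ν`. -/
theorem lintegral_measure_Iio_pow_le (ν : Measure α) [SigmaFinite ν] (k : ℕ) :
    (k + 1) * ∫⁻ y, ν (Iio y) ^ k ∂ν ≤ ν univ ^ (k + 1) := by
  set A : Fin (k + 1) → Set (Fin (k + 1) → α) := fun i ↦ {w | ∀ j ≠ i, w j < w i}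
  have hdisj : Pairwise (Function.onFun Disjoint A) := fun i j hij ↦
    disjoint_left.2 fun w hi hj ↦ lt_asymm (hi j hij.symm) (hj i hij)
  calc (k + 1) * ∫⁻ y, ν (Iio y) ^ k ∂ν = ∑ i, Measure.pi (fun _ ↦ ν) (A i) := by
        simp [A, Measure.pi_setOf_forall_ne_lt]
    _ = Measure.pi (fun _ ↦ ν) (⋃ i, A i) :=
        ((measure_iUnion hdisj measurableSet_setOf_forall_ne_lt).trans (tsum_fintype _)).symm
    _ ≤ Measure.pi (fun _ ↦ ν) univ := measure_mono (subset_univ _)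
    _ = ν univ ^ (k + 1) := by simp [Measure.pi_univ]

theorem setLIntegral_measure_Ioo_pow_le (ν : Measure α) (a b : α) (k : ℕ) :
    (k + 1) * ∫⁻ y in Ioc a b, ν (Ioo a y) ^ k ∂ν ≤ ν (Ioc a b) ^ (k + 1) := by
  by_cases hfin : ν (Ioc a b) = ⊤
  · simp [hfin]
  have : IsFiniteMeasure (ν.restrict (Ioc a b)) := isFiniteMeasure_restrict.2 hfin
  convert lintegral_measure_Iio_pow_le (ν.restrict (Ioc a b)) k using 2
  · refine setLIntegral_congr_fun measurableSet_Ioc fun y hy ↦ ?_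
    rw [Measure.restrict_apply measurableSet_Iio]
    congr 2
    ext z
    simp only [mem_inter_iff, mem_Iio, mem_Ioc, mem_Ioo]
    exact ⟨fun h ↦ ⟨h.2, h.1, h.2.le.trans hy.2⟩, fun h ↦ ⟨h.2.1, h.1⟩⟩
  · simp

end MeasureTheory

namespace MString

variable (S : MString)

noncomputable def weightedMeasure : Measure ℝ := S.μ.withDensity fun y ↦ ENNReal.ofReal y

noncomputable def FLeft (x : ℝ) : ℝ := (S.weightedMeasure (Ioo 0 x)).toReal

lemma μ_Ioc_lt_top {a : ℝ} (ha : 0 < a) (b : ℝ) : S.μ (Ioc a b) < ⊤ := by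
  rcases le_total a b with hab | hba
  · rw [S.stieltjes a b ha hab]
    exact ENNReal.ofReal_lt_top
  · simp [Ioc_eq_empty_of_le hba]

lemma weightedMeasure_apply {s : Set ℝ} (hs : MeasurableSet s) :
    S.weightedMeasure s = ∫⁻ y in s, ENNReal.ofReal y ∂S.μ :=
  withDensity_apply _ hs

lemma weightedMeasure_Ioc_lt_top (x : ℝ) : S.weightedMeasure (Ioc 0 x) < ⊤ := by
  have hIoc1x : S.weightedMeasure (Ioc 1 x) < ⊤ := by
    rw [weightedMeasure_apply _ measurableSet_Ioc]
    calc ∫⁻ y in Ioc 1 x, ENNReal.ofReal y ∂S.μ ≤ ∫⁻ _ in Ioc 1 x, ENNReal.ofReal x ∂S.μ :=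
          setLIntegral_mono measurable_const fun y hy ↦ ENNReal.ofReal_le_ofReal hy.2
      _ < ⊤ := by
          rw [setLIntegral_const]
          exact ENNReal.mul_lt_top ENNReal.ofReal_lt_top (S.μ_Ioc_lt_top one_pos x)
  calc S.weightedMeasure (Ioc 0 x) ≤ S.weightedMeasure (Ioc 0 1 ∪ Ioc 1 x) :=
        measure_mono Ioc_subset_Ioc_union_Ioc
    _ < ⊤ := by
        refine (measure_union_le _ _).trans_lt (ENNReal.add_lt_top.2 ⟨?_, hIoc1x⟩)
        rw [weightedMeasure_apply _ measurableSet_Ioc]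
        exact S.int_fin

lemma F_eq_toReal (x : ℝ) : S.F x = (S.weightedMeasure (Ioc 0 x)).toReal := by
  rw [F, weightedMeasure_apply _ measurableSet_Ioc]
  exact integral_eq_lintegral_of_nonneg_ae
    ((ae_restrict_iff' measurableSet_Ioc).2 (ae_of_all _ fun y hy ↦ hy.1.le))
    measurable_id.aestronglyMeasurable

lemma FLeft_le_F (x : ℝ) : S.FLeft x ≤ S.F x := by
  rw [F_eq_toReal]
  exact ENNReal.toReal_mono (S.weightedMeasure_Ioc_lt_top x).ne (measure_mono Ioo_subset_Ioc_self)

lemma F_le_FLeft {z x : ℝ} (h : z < x) : S.F z ≤ S.FLeft x := by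
  rw [F_eq_toReal]
  refine ENNReal.toReal_mono ((measure_mono Ioo_subset_Ioc_self).trans_lt
    (S.weightedMeasure_Ioc_lt_top x)).ne (measure_mono fun y hy ↦ ⟨hy.1, hy.2.trans_lt h⟩)

lemma FLeft_nonneg (x : ℝ) : 0 ≤ S.FLeft x := ENNReal.toReal_nonneg

lemma F_nonneg (x : ℝ) : 0 ≤ S.F x := (S.FLeft_nonneg x).trans (S.FLeft_le_F x)

lemma factorial_mul_lintegral_le {d : ℕ} {f : ℝ → ℝ}
    (hfd : ∀ y, 0 < y → d ! * f y ≤ y * S.FLeft y ^ d) (x : ℝ) :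
    (d + 1)! * ∫⁻ y in Ioc 0 x, ENNReal.ofReal (f y) ∂S.μ ≤
      S.weightedMeasure (Ioc 0 x) ^ (d + 1) := by
  have hbound : ∀ y ∈ Ioc (0 : ℝ) x, (d ! : ℝ≥0∞) * ENNReal.ofReal (f y) ≤
      ENNReal.ofReal y * S.weightedMeasure (Ioo 0 y) ^ d := by
    intro y hy
    have hfin : S.weightedMeasure (Ioo 0 y) ≠ ⊤ :=
      ((measure_mono Ioo_subset_Ioc_self).trans_lt (S.weightedMeasure_Ioc_lt_top y)).ne
    rw [← ENNReal.ofReal_natCast, ← ENNReal.ofReal_mul (by positivity),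
      ← ENNReal.ofReal_toReal hfin, ← ENNReal.ofReal_pow ENNReal.toReal_nonneg,
      ← ENNReal.ofReal_mul hy.1.le]
    exact ENNReal.ofReal_le_ofReal (hfd y hy.1)
  have hmeas : Measurable fun y ↦ S.weightedMeasure (Ioo 0 y) ^ d :=
    (Monotone.measurable fun _ _ hab ↦ measure_mono (Ioo_subset_Ioo_right hab)).pow_const d
  calc (d + 1)! * ∫⁻ y in Ioc 0 x, ENNReal.ofReal (f y) ∂S.μ
      = (d + 1) * ∫⁻ y in Ioc 0 x, d ! * ENNReal.ofReal (f y) ∂S.μ := by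
        rw [lintegral_const_mul' _ _ (ENNReal.natCast_ne_top _), Nat.factorial_succ]
        push_cast
        ring
    _ ≤ (d + 1) * ∫⁻ y in Ioc 0 x, ENNReal.ofReal y * S.weightedMeasure (Ioo 0 y) ^ d ∂S.μ :=
        mul_le_mul_of_nonneg_left (setLIntegral_mono' measurableSet_Ioc hbound) zero_le
    _ = (d + 1) * ∫⁻ y in Ioc 0 x, S.weightedMeasure (Ioo 0 y) ^ d ∂S.weightedMeasure := by
        congr 1
        exact (setLIntegral_withDensity_eq_setLIntegral_mul _ ENNReal.measurable_ofReal hmeas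
          measurableSet_Ioc).symm
    _ ≤ S.weightedMeasure (Ioc 0 x) ^ (d + 1) := setLIntegral_measure_Ioo_pow_le _ _ _ _

lemma mBul_eq_toReal_lintegral {f : ℝ → ℝ} (hf : Measurable f) (hf0 : ∀ y, 0 < y → 0 ≤ f y)
    (x : ℝ) : mBul S f x = (∫⁻ y in Ioc 0 x, ENNReal.ofReal (f y) ∂S.μ).toReal :=
  integral_eq_lintegral_of_nonneg_ae
    ((ae_restrict_iff' measurableSet_Ioc).2 (ae_of_all _ fun y hy ↦ hf0 y hy.1))
    hf.aestronglyMeasurable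

lemma mBul_nonneg {f : ℝ → ℝ} (hf0 : ∀ y, 0 < y → 0 ≤ f y) (x : ℝ) : 0 ≤ mBul S f x :=
  setIntegral_nonneg measurableSet_Ioc fun y hy ↦ hf0 y hy.1

lemma monotone_mBul {d : ℕ} {f : ℝ → ℝ} (hf : Measurable f) (hf0 : ∀ y, 0 < y → 0 ≤ f y)
    (hfd : ∀ y, 0 < y → d ! * f y ≤ y * S.FLeft y ^ d) : Monotone (mBul S f) := by
  intro a b hab
  rw [S.mBul_eq_toReal_lintegral hf hf0, S.mBul_eq_toReal_lintegral hf hf0]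
  refine ENNReal.toReal_mono ?_
    (lintegral_mono' (Measure.restrict_mono (Ioc_subset_Ioc_right hab) le_rfl) le_rfl)
  refine (ENNReal.lt_top_of_mul_ne_top_right ?_ (Nat.cast_ne_zero.2 (d + 1).factorial_ne_zero)).ne
  exact ((S.factorial_mul_lintegral_le hfd b).trans_lt
    (ENNReal.pow_lt_top (S.weightedMeasure_Ioc_lt_top b))).ne

lemma factorial_mul_mBul_le {d : ℕ} {f : ℝ → ℝ} (hf : Measurable f)
    (hf0 : ∀ y, 0 < y → 0 ≤ f y)
    (hfd : ∀ y, 0 < y → d ! * f y ≤ y * S.FLeft y ^ d) (x : ℝ) :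
    (d + 1)! * mBul S f x ≤ S.F x ^ (d + 1) := by
  rw [S.mBul_eq_toReal_lintegral hf hf0, F_eq_toReal, ← ENNReal.toReal_natCast,
    ← ENNReal.toReal_mul, ← ENNReal.toReal_pow]
  exact ENNReal.toReal_mono (ENNReal.pow_lt_top (S.weightedMeasure_Ioc_lt_top x)).ne
    (S.factorial_mul_lintegral_le hfd x)

lemma monotone_sBul {g : ℝ → ℝ} (hg : Monotone g) (hg0 : ∀ y, 0 ≤ g y) : Monotone (sBul g) := by
  intro a b hab
  rw [← sub_nonneg, sBul, sBul,
    intervalIntegral.integral_interval_sub_left hg.intervalIntegrable hg.intervalIntegrable]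
  exact intervalIntegral.integral_nonneg hab fun u _ ↦ hg0 u

lemma factorial_mul_sBul_le {d : ℕ} {g : ℝ → ℝ} (hg : Monotone g)
    (hgd : ∀ z, (d + 1)! * g z ≤ S.F z ^ (d + 1)) {y : ℝ} (hy : 0 ≤ y) :
    (d + 1)! * sBul g y ≤ y * S.FLeft y ^ (d + 1) :=
  calc (d + 1)! * sBul g y = ∫ z in 0..y, (d + 1)! * g z :=
        (intervalIntegral.integral_const_mul _ _).symm
    _ ≤ ∫ _ in 0..y, S.FLeft y ^ (d + 1) :=
        intervalIntegral.integral_mono_on_of_le_Ioo hy (hg.intervalIntegrable.const_mul _)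
          intervalIntegrable_const fun z hz ↦
            (hgd z).trans (pow_le_pow_left₀ (S.F_nonneg z) (S.F_le_FLeft hz.2) _)
    _ = y * S.FLeft y ^ (d + 1) := by simp

lemma smIter_id_bounds (d : ℕ) : Monotone (smIter S d id) ∧
    ∀ y, 0 ≤ y → 0 ≤ smIter S d id y ∧ d ! * smIter S d id y ≤ y * S.FLeft y ^ d := by
  induction d with
  | zero => exact ⟨monotone_id, fun y hy ↦ ⟨hy, by simp [smIter]⟩⟩
  | succ d ih =>
    obtain ⟨hmono, hbd⟩ := ih
    have hf0 : ∀ y, 0 < y → 0 ≤ smIter S d id y := fun y hy ↦ (hbd y hy.le).1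
    have hfd : ∀ y, 0 < y → d ! * smIter S d id y ≤ y * S.FLeft y ^ d :=
      fun y hy ↦ (hbd y hy.le).2
    have hg := S.monotone_mBul hmono.measurable hf0 hfd
    have hg0 := S.mBul_nonneg hf0
    refine ⟨monotone_sBul hg hg0, fun y hy ↦ ⟨?_, S.factorial_mul_sBul_le hg
      (S.factorial_mul_mBul_le hmono.measurable hf0 hfd) hy⟩⟩
    exact intervalIntegral.integral_nonneg hy fun u _ ↦ hg0 u

lemma E_zero (d : ℕ) (x : ℝ) : S.E d 0 x = S.F x ^ d / d ! := by
  rw [E, zero_mul, Real.exp_zero, mul_one, one_div_mul_eq_div]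

end MString

theorem stmt0 (S : MString) :
    (∀ x : ℝ, 0 ≤ x → ∀ d : ℕ, MString.smIter S d id x ≤ x * MString.E S d 0 x) ∧
    (∀ x : ℝ, 0 ≤ x → ∀ d : ℕ, 1 ≤ d →
      MString.mBul S (MString.smIter S (d - 1) id) x ≤ MString.E S d 0 x) := by
  refine ⟨fun x hx d ↦ ?_, fun x hx d hd ↦ ?_⟩
  · rw [MString.E_zero, mul_div_assoc', le_div_iff₀ (by positivity), mul_comm]
    calc d ! * S.smIter d id x ≤ x * S.FLeft x ^ d := ((S.smIter_id_bounds d).2 x hx).2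
      _ ≤ x * S.F x ^ d := by gcongr; exacts [S.FLeft_nonneg x, S.FLeft_le_F x]
  · obtain ⟨k, rfl⟩ := Nat.exists_eq_add_of_le' hd
    obtain ⟨hmono, hbd⟩ := S.smIter_id_bounds k
    rw [MString.E_zero, le_div_iff₀ (by positivity), mul_comm, Nat.add_sub_cancel]
    exact S.factorial_mul_mBul_le hmono.measurable (fun y hy ↦ (hbd y hy.le).1)
      (fun y hy ↦ (hbd y hy.le).2) x
end

section
/- Let m ∈ 𝓜 and let k ≥ 1 be an integer. Then the function (−1)^k G^k_m is nondecreasing and concave on [0,1]. In particular, for all 0 < x < y ≤ 1, (−1)^k G^k_m(y)/y ≤ (−1)^k G^k_m(x)/x. -/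
/-!
`(-1)^k G^k_m` is the primitive `x ↦ ∫₀ˣ g` of a density `g` that is nonnegative, nonincreasing
and integrable on `(0,1]`. For `k = 1` the density is `m(1) - m(y)`, integrable because by the
layer cake formula its integral over `(0,1]` is `∫_{(0,1]} x dm(x)`. For `k + 1` it is
`y ↦ ∫_{(y,1]} (-1)^k G^k_m dm`: nonnegative and nonincreasing since `(-1)^k G^k_m ≥ 0`, and
dominated by `(-1)^k G^k_m(1) · (m(1) - m(y))` since `(-1)^k G^k_m` is nondecreasing. A primitive
of such a density is nondecreasing and concave, and a concave function vanishing at `0` has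
nonincreasing slope `f(x)/x`.
-/


open MeasureTheory Filter Topology Set
open scoped ENNReal NNReal

theorem monotoneOn_primitive_of_nonneg {g : ℝ → ℝ} {a b : ℝ}
    (hg : IntervalIntegrable g volume a b) (hpos : ∀ y ∈ Ioc a b, 0 ≤ g y) :
    MonotoneOn (fun x => ∫ y in a..x, g y) (Icc a b) := by
  intro x hx y hy hxy
  have hnonneg : 0 ≤ᵐ[volume.restrict (Ioc a y)] g :=
    (ae_restrict_iff' measurableSet_Ioc).2 <|
      ae_of_all _ fun z hz => hpos z ⟨hz.1, hz.2.trans hy.2⟩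
  exact intervalIntegral.integral_mono_interval le_rfl hx.1 hxy hnonneg
    (hg.mono_set (uIcc_subset_uIcc left_mem_uIcc (Icc_subset_uIcc hy)))

theorem concaveOn_primitive_of_antitoneOn {g : ℝ → ℝ} {a b : ℝ}
    (hg : IntervalIntegrable g volume a b) (hanti : AntitoneOn g (Ioo a b)) :
    ConcaveOn ℝ (Icc a b) (fun x => ∫ y in a..x, g y) := by
  refine concaveOn_iff_slope_anti_adjacent.2 ⟨convex_Icc a b, fun x y z hx hz hxy hyz => ?_⟩
  have hsub : ∀ u v, u ∈ Icc a b → v ∈ Icc a b → IntervalIntegrable g volume u v :=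
    fun u v hu hv => hg.mono_set (uIcc_subset_uIcc (Icc_subset_uIcc hu) (Icc_subset_uIcc hv))
  have hy : y ∈ Ioo a b := ⟨hx.1.trans_lt hxy, hyz.trans_le hz.2⟩
  have hy' : y ∈ Icc a b := Ioo_subset_Icc_self hy
  have hright : ∫ t in y..z, g t ≤ (z - y) * g y := by
    calc ∫ t in y..z, g t ≤ ∫ _ in y..z, g y :=
          intervalIntegral.integral_mono_on_of_le_Ioo hyz.le (hsub y z hy' hz)
            intervalIntegrable_const
            fun t ht => hanti hy ⟨hy.1.trans ht.1, ht.2.trans_le hz.2⟩ ht.1.le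
      _ = (z - y) * g y := by simp
  have hleft : (y - x) * g y ≤ ∫ t in x..y, g t := by
    calc (y - x) * g y = ∫ _ in x..y, g y := by simp
      _ ≤ ∫ t in x..y, g t :=
          intervalIntegral.integral_mono_on_of_le_Ioo hxy.le intervalIntegrable_const
            (hsub x y hx hy')
            fun t ht => hanti ⟨hx.1.trans_lt ht.1, ht.2.trans hy.2⟩ hy ht.2.le
  have ha : a ∈ Icc a b := left_mem_Icc.2 (hx.1.trans hx.2)
  rw [intervalIntegral.integral_interval_sub_left (hsub a z ha hz) (hsub a y ha hy'),
    intervalIntegral.integral_interval_sub_left (hsub a y ha hy') (hsub a x ha hx)]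
  calc (∫ t in y..z, g t) / (z - y) ≤ g y := by rw [div_le_iff₀ (sub_pos.2 hyz)]; linarith
    _ ≤ (∫ t in x..y, g t) / (y - x) := by rw [le_div_iff₀ (sub_pos.2 hxy)]; linarith

theorem ConcaveOn.div_le_div_of_map_zero {s : Set ℝ} {f : ℝ → ℝ} (hf : ConcaveOn ℝ s f)
    (h0 : 0 ∈ s) (hf0 : f 0 = 0) {x y : ℝ} (hx : x ∈ s) (hy : y ∈ s) (hx0 : 0 < x)
    (hxy : x ≤ y) :
    f y / y ≤ f x / x := by
  have := hf.neg.secant_mono h0 hx hy hx0.ne' (hx0.trans_le hxy).ne' hxy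
  simpa [hf0, neg_div] using this

namespace MString

variable (S : MString)

theorem measureReal_Ioc {a b : ℝ} (ha : 0 < a) (hab : a ≤ b) :
    S.μ.real (Ioc a b) = S.m b - S.m a := by
  rw [measureReal_def, S.stieltjes a b ha hab,
    ENNReal.toReal_ofReal (sub_nonneg.2 (S.strict_mono.monotoneOn ha (ha.trans_le hab) hab))]

theorem m_one_sub_nonneg {y : ℝ} (hy : y ∈ Ioc 0 1) : 0 ≤ S.m 1 - S.m y :=
  sub_nonneg.2 (S.strict_mono.monotoneOn hy.1 (mem_Ioi.2 one_pos) hy.2)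

theorem antitoneOn_m_one_sub : AntitoneOn (fun y => S.m 1 - S.m y) (Ioc 0 1) :=
  fun _ ha _ hb hab => sub_le_sub_left (S.strict_mono.monotoneOn ha.1 hb.1 hab) _

theorem integrableOn_m_one_sub : IntegrableOn (fun y => S.m 1 - S.m y) (Ioc 0 1) := by
  refine ⟨(aemeasurable_restrict_of_antitoneOn measurableSet_Ioc
    S.antitoneOn_m_one_sub).aestronglyMeasurable, ?_⟩
  rw [hasFiniteIntegral_iff_ofReal
    ((ae_restrict_iff' measurableSet_Ioc).2 (ae_of_all _ fun _ => S.m_one_sub_nonneg))]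
  refine lt_of_le_of_lt ?_ S.int_fin
  have hid : 0 ≤ᵐ[S.μ.restrict (Ioc 0 1)] id :=
    (ae_restrict_iff' measurableSet_Ioc).2 (ae_of_all _ fun x hx => hx.1.le)
  calc ∫⁻ y in Ioc 0 1, ENNReal.ofReal (S.m 1 - S.m y)
      = ∫⁻ t in Ioc 0 1, S.μ.restrict (Ioc 0 1) {x | t < id x} := by
        refine setLIntegral_congr_fun measurableSet_Ioc fun t ht => ?_
        change _ = S.μ.restrict (Ioc 0 1) (Ioi t)
        rw [Measure.restrict_apply measurableSet_Ioi, inter_comm, Ioc_inter_Ioi,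
          sup_eq_right.2 ht.1.le, S.stieltjes t 1 ht.1 ht.2]
    _ ≤ ∫⁻ t in Ioi 0, S.μ.restrict (Ioc 0 1) {x | t < id x} :=
        lintegral_mono_set Ioc_subset_Ioi_self
    _ = ∫⁻ x in Ioc 0 1, ENNReal.ofReal x ∂S.μ :=
        (lintegral_eq_lintegral_meas_lt _ hid measurable_id.aemeasurable).symm

theorem integrableOn_Ioc_of_monotoneOn {h : ℝ → ℝ} {a b : ℝ} (ha : 0 < a) (hab : a ≤ b)
    (hh : MonotoneOn h (Icc a b)) : IntegrableOn h (Ioc a b) S.μ := by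
  have hfin : S.μ.restrict (Ioc a b) (Icc a b) ≠ ⊤ := by
    rw [Measure.restrict_apply measurableSet_Icc, inter_eq_right.2 Ioc_subset_Icc_self,
      S.stieltjes a b ha hab]
    exact ENNReal.ofReal_ne_top
  have := hh.integrableOn_of_measure_ne_top (isLeast_Icc hab) (isGreatest_Icc hab) hfin
    measurableSet_Icc
  rwa [IntegrableOn, Measure.restrict_restrict measurableSet_Icc,
    inter_eq_right.2 Ioc_subset_Icc_self] at this

theorem jInt_of_le {f : ℝ → ℝ} {y : ℝ} (hy : y ≤ 1) :
    S.jInt f y = ∫ z in Ioc y 1, f z ∂S.μ :=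
  if_pos hy

theorem jInt_const_mul (c : ℝ) (f : ℝ → ℝ) (y : ℝ) :
    S.jInt (fun z => c * f z) y = c * S.jInt f y := by
  unfold jInt
  split_ifs <;> simp only [integral_const_mul, mul_neg]

theorem jInt_nonneg {h : ℝ → ℝ} (hpos : ∀ z ∈ Ioc 0 1, 0 ≤ h z) {y : ℝ}
    (hy : y ∈ Ioc 0 1) :
    0 ≤ S.jInt h y := by
  rw [S.jInt_of_le hy.2]
  exact setIntegral_nonneg measurableSet_Ioc fun z hz => hpos z ⟨hy.1.trans hz.1, hz.2⟩

theorem antitoneOn_jInt {h : ℝ → ℝ} (hmono : MonotoneOn h (Icc 0 1))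
    (hpos : ∀ z ∈ Ioc 0 1, 0 ≤ h z) : AntitoneOn (S.jInt h) (Ioc 0 1) := by
  intro y hy y' hy' hyy'
  rw [S.jInt_of_le hy.2, S.jInt_of_le hy'.2]
  exact setIntegral_mono_set
    (S.integrableOn_Ioc_of_monotoneOn hy.1 hy.2 (hmono.mono (Icc_subset_Icc hy.1.le le_rfl)))
    ((ae_restrict_iff' measurableSet_Ioc).2 <|
      ae_of_all _ fun z hz => hpos z ⟨hy.1.trans hz.1, hz.2⟩)
    (Ioc_subset_Ioc hyy' le_rfl).eventuallyLE

theorem jInt_le {h : ℝ → ℝ} (hmono : MonotoneOn h (Icc 0 1)) {y : ℝ} (hy : y ∈ Ioc 0 1) :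
    S.jInt h y ≤ h 1 * (S.m 1 - S.m y) := by
  have hfin : S.μ (Ioc y 1) ≠ ⊤ := by
    rw [S.stieltjes y 1 hy.1 hy.2]
    exact ENNReal.ofReal_ne_top
  rw [S.jInt_of_le hy.2, ← S.measureReal_Ioc hy.1 hy.2, mul_comm, ← smul_eq_mul,
    ← setIntegral_const]
  exact setIntegral_mono_on
    (S.integrableOn_Ioc_of_monotoneOn hy.1 hy.2 (hmono.mono (Icc_subset_Icc hy.1.le le_rfl)))
    (integrableOn_const hfin) measurableSet_Ioc
    fun z hz => hmono ⟨(hy.1.trans hz.1).le, hz.2⟩ (right_mem_Icc.2 zero_le_one) hz.2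

theorem integrableOn_jInt {h : ℝ → ℝ} (hmono : MonotoneOn h (Icc 0 1))
    (hpos : ∀ z ∈ Ioc 0 1, 0 ≤ h z) : IntegrableOn (S.jInt h) (Ioc 0 1) :=
  (S.integrableOn_m_one_sub.const_mul (h 1)).mono'
    (aemeasurable_restrict_of_antitoneOn measurableSet_Ioc
      (S.antitoneOn_jInt hmono hpos)).aestronglyMeasurable
    ((ae_restrict_iff' measurableSet_Ioc).2 (ae_of_all _ fun y hy => by
      rw [Real.norm_of_nonneg (S.jInt_nonneg hpos hy)]
      exact S.jInt_le hmono hy))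

theorem G_apply_zero (k : ℕ) : S.G k 0 = 0 := by
  rcases k with _ | _ | k <;> simp [G]

noncomputable def signedG (k : ℕ) (x : ℝ) : ℝ := (-1) ^ k * S.G k x

theorem signedG_one (x : ℝ) : S.signedG 1 x = ∫ y in 0..x, S.m 1 - S.m y := by
  simp [signedG, G, mtilde, ← intervalIntegral.integral_neg]

theorem signedG_add_two (k : ℕ) (x : ℝ) :
    S.signedG (k + 2) x = ∫ y in 0..x, S.jInt (S.signedG (k + 1)) y := by
  unfold signedG
  simp only [jInt_const_mul, intervalIntegral.integral_const_mul, G, pow_succ]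
  ring

theorem exists_signedG_eq_primitive (k : ℕ) :
    ∃ g : ℝ → ℝ, IntervalIntegrable g volume 0 1 ∧ (∀ y ∈ Ioc (0 : ℝ) 1, 0 ≤ g y) ∧
      AntitoneOn g (Ioc 0 1) ∧ S.signedG (k + 1) = fun x => ∫ y in 0..x, g y := by
  induction k with
  | zero =>
    exact ⟨_, (intervalIntegrable_iff_integrableOn_Ioc_of_le zero_le_one).2
      S.integrableOn_m_one_sub, fun _ => S.m_one_sub_nonneg, S.antitoneOn_m_one_sub,
      funext S.signedG_one⟩
  | succ k ih =>
    obtain ⟨g, hg, hpos, -, hG⟩ := ih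
    have hmono : MonotoneOn (S.signedG (k + 1)) (Icc 0 1) :=
      hG ▸ monotoneOn_primitive_of_nonneg hg hpos
    have hnonneg : ∀ z ∈ Ioc (0 : ℝ) 1, 0 ≤ S.signedG (k + 1) z := fun z hz => by
      simpa [signedG, G_apply_zero] using
        hmono (left_mem_Icc.2 zero_le_one) (Ioc_subset_Icc_self hz) hz.1.le
    exact ⟨_, (intervalIntegrable_iff_integrableOn_Ioc_of_le zero_le_one).2
      (S.integrableOn_jInt hmono hnonneg), fun _ => S.jInt_nonneg hnonneg,
      S.antitoneOn_jInt hmono hnonneg, funext (S.signedG_add_two k)⟩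

end MString

theorem stmt6 (S : MString) (k : ℕ) (hk : 1 ≤ k) :
    MonotoneOn (fun x => (-1 : ℝ) ^ k * MString.G S k x) (Set.Icc (0:ℝ) 1) ∧
    ConcaveOn ℝ (Set.Icc (0:ℝ) 1) (fun x => (-1 : ℝ) ^ k * MString.G S k x) ∧
    (∀ x y : ℝ, 0 < x → x < y → y ≤ 1 →
      (-1 : ℝ) ^ k * MString.G S k y / y ≤ (-1 : ℝ) ^ k * MString.G S k x / x) := by
  obtain ⟨j, rfl⟩ : ∃ j, k = j + 1 := ⟨k - 1, by omega⟩
  obtain ⟨g, hg, hpos, hanti, hG⟩ := S.exists_signedG_eq_primitive j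
  have hmono : MonotoneOn (S.signedG (j + 1)) (Icc 0 1) :=
    hG ▸ monotoneOn_primitive_of_nonneg hg hpos
  have hconc : ConcaveOn ℝ (Icc 0 1) (S.signedG (j + 1)) :=
    hG ▸ concaveOn_primitive_of_antitoneOn hg (hanti.mono Ioo_subset_Ioc_self)
  refine ⟨hmono, hconc, fun x y hx hxy hy => ?_⟩
  exact hconc.div_le_div_of_map_zero (left_mem_Icc.2 zero_le_one)
    (by simp [MString.signedG, MString.G_apply_zero]) ⟨hx.le, hxy.le.trans hy⟩
    ⟨hx.le.trans hxy.le, hy⟩ hx hxy.le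
end

section
/- Let m ∈ 𝓜. Then for every integer k with 1 ≤ k ≤ d(m), lim_{x→0+} (−1)^k G^k_m(x)/x = ∞. -/
/-!
On `(0, 1]` one has `(-1)^k G^k(x) = ∫₀ˣ T_{k-1}`, where `T_j(y) = ∫_{(y,1]} (-1)^j G^j dm`
(and `T_0(y) = m(1) - m(y)`) is nonnegative and decreasing; hence `(-1)^k G^k(x) / x ≥ T_{k-1}(x)`.
For `k ≤ d(m)` the integral `∫_{(0,1]} (-1)^{k-1} G^{k-1} dm` diverges (for `k = 1` this says that
`m` is unbounded below), so `T_{k-1}(x) → ∞` as `x → 0+` by monotone convergence.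
Tonelli gives `∫₀ˣ T_j ≤ ∫_{(0,1]} y (-1)^j G^j(y) dm(y)`, hence `|G^k| ≤ (∫_{(0,1]} y dm)^k`;
this finiteness is what allows passing between the signed integrals and their `ℝ≥0∞` versions.
-/

open MeasureTheory Filter Topology Set
open scoped ENNReal NNReal

lemma sFinite_restrict_of_setLIntegral_ne_top {α : Type*} [MeasurableSpace α] {μ : Measure α}
    {s : Set α} {f : α → ℝ≥0∞} (hs : MeasurableSet s) (hf : AEMeasurable f (μ.restrict s))
    (hpos : ∀ x ∈ s, f x ≠ 0) (hfin : ∫⁻ x in s, f x ∂μ ≠ ∞) : SFinite (μ.restrict s) :=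
  have : IsFiniteMeasure ((μ.restrict s).withDensity f) := isFiniteMeasure_withDensity hfin
  sFinite_of_absolutelyContinuous <|
    withDensity_absolutelyContinuous' hf ((ae_restrict_iff' hs).2 (ae_of_all _ hpos))

lemma setLIntegral_Ioc_lintegral_Ioi_le (ν : Measure ℝ) [SFinite ν] {g : ℝ → ℝ≥0∞}
    (hg : Measurable g) (x : ℝ) :
    ∫⁻ y in Ioc 0 x, ∫⁻ w in Ioi y, g w ∂ν ≤ ∫⁻ w, ENNReal.ofReal w * g w ∂ν := by
  have hmeas : Measurable (Function.uncurry fun y w : ℝ => (Ioi y).indicator g w) :=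
    (hg.comp measurable_snd).indicator (measurableSet_lt measurable_fst measurable_snd)
  simp_rw [← lintegral_indicator measurableSet_Ioi]
  rw [lintegral_lintegral_swap hmeas.aemeasurable]
  refine lintegral_mono fun w => ?_
  calc ∫⁻ y in Ioc 0 x, (Ioi y).indicator g w
      ≤ ∫⁻ y in Ioc 0 x, (Ioc 0 w).indicator (fun _ => g w) y := by
        refine setLIntegral_mono' measurableSet_Ioc fun y hy => ?_
        by_cases hyw : y < w
        · have hy' : y ∈ Ioc 0 w := ⟨hy.1, hyw.le⟩
          rw [indicator_of_mem (mem_Ioi.2 hyw), indicator_of_mem hy']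
        · rw [indicator_of_notMem (notMem_Ioi.2 (not_lt.1 hyw))]
          exact zero_le
    _ ≤ ∫⁻ y, (Ioc 0 w).indicator (fun _ => g w) y := setLIntegral_le_lintegral _ _
    _ = ENNReal.ofReal w * g w := by
        rw [lintegral_indicator_const measurableSet_Ioc, Real.volume_Ioc, sub_zero, mul_comm]

lemma tendsto_measure_Ioc_nhdsGT (ν : Measure ℝ) (a b : ℝ) :
    Tendsto (fun y => ν (Ioc y b)) (𝓝[>] a) (𝓝 (ν (Ioc a b))) := by
  have : (atBot : Filter (Ioi a)).IsCountablyGenerated := by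
    rw [← comap_coe_Ioi_nhdsGT a]; infer_instance
  have hU : ⋃ y : Ioi a, Ioc (y : ℝ) b = Ioc a b := by
    ext z
    simp only [mem_iUnion, mem_Ioc, Subtype.exists, mem_Ioi, exists_prop]
    constructor
    · rintro ⟨y, hay, hyz, hzb⟩; exact ⟨hay.trans hyz, hzb⟩
    · rintro ⟨haz, hzb⟩; exact ⟨(a + z) / 2, by linarith, by linarith, hzb⟩
  rw [← map_coe_Ioi_atBot a, tendsto_map'_iff, ← hU]
  exact tendsto_measure_iUnion_atBot fun y z hyz => Ioc_subset_Ioc_left hyz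

lemma antitone_setLIntegral_Ioc (μ : Measure ℝ) (f : ℝ → ℝ≥0∞) (b : ℝ) :
    Antitone fun y => ∫⁻ z in Ioc y b, f z ∂μ :=
  fun _ _ hyz => lintegral_mono_set (Ioc_subset_Ioc_left hyz)

lemma tendsto_setLIntegral_Ioc_nhdsGT (μ : Measure ℝ) (f : ℝ → ℝ≥0∞) (a b : ℝ) :
    Tendsto (fun y => ∫⁻ z in Ioc y b, f z ∂μ) (𝓝[>] a) (𝓝 (∫⁻ z in Ioc a b, f z ∂μ)) := by
  simpa only [withDensity_apply _ measurableSet_Ioc] using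
    tendsto_measure_Ioc_nhdsGT (μ.withDensity f) a b

lemma ofReal_mul_le_setLIntegral_Ioc_of_antitone {f : ℝ → ℝ≥0∞} (hf : Antitone f) (x : ℝ) :
    ENNReal.ofReal x * f x ≤ ∫⁻ y in Ioc 0 x, f y :=
  calc ENNReal.ofReal x * f x = ∫⁻ _ in Ioc 0 x, f x := by
        rw [setLIntegral_const, Real.volume_Ioc, sub_zero, mul_comm]
    _ ≤ ∫⁻ y in Ioc 0 x, f y := setLIntegral_mono' measurableSet_Ioc fun y hy => hf hy.2

namespace MString

/-- `(-1)^k G^k` on `(0, 1]` (see `G_eq`), as an `ℝ≥0∞`-valued function so that the recursion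
needs no integrability; the value `1` at `k = 0` makes `G^1` fit the same recursion. -/
noncomputable def absG (S : MString) : ℕ → ℝ → ℝ≥0∞
  | 0 => 1
  | k + 1 => fun x => ∫⁻ y in Ioc 0 x, ∫⁻ z in Ioc y 1, S.absG k z ∂S.μ

variable (S : MString)

lemma measure_Ioc_lt_top {y : ℝ} (hy : 0 < y) : S.μ (Ioc y 1) < ∞ := by
  rcases le_or_gt y 1 with hy1 | hy1
  · rw [S.stieltjes y 1 hy hy1]; exact ENNReal.ofReal_lt_top
  · rw [Ioc_eq_empty_of_le hy1.le, measure_empty]; exact ENNReal.zero_lt_top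

instance : SFinite (S.μ.restrict (Ioc 0 1)) :=
  sFinite_restrict_of_setLIntegral_ne_top measurableSet_Ioc ENNReal.measurable_ofReal.aemeasurable
    (fun _ hx => ENNReal.ofReal_pos.2 hx.1 |>.ne') S.int_fin.ne

lemma absG_monotone (k : ℕ) : Monotone (S.absG k) := by
  cases k with
  | zero => exact monotone_const
  | succ k => exact fun _ _ hxy => lintegral_mono_set (Ioc_subset_Ioc_right hxy)

lemma absG_le (k : ℕ) (x : ℝ) : S.absG k x ≤ (∫⁻ y in Ioc 0 1, ENNReal.ofReal y ∂S.μ) ^ k := by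
  induction k generalizing x with
  | zero => simp [absG]
  | succ k ih =>
    set A := ∫⁻ y in Ioc 0 1, ENNReal.ofReal y ∂S.μ
    have htail : ∀ y ∈ Ioc (0 : ℝ) x, ∫⁻ z in Ioc y 1, S.absG k z ∂S.μ =
        ∫⁻ z in Ioi y, S.absG k z ∂S.μ.restrict (Ioc 0 1) := by
      intro y hy
      rw [Measure.restrict_restrict measurableSet_Ioi]
      congr 2
      exact Set.ext fun z => ⟨fun ⟨h1, h2⟩ => ⟨h1, hy.1.trans h1, h2⟩, fun ⟨h1, _, h3⟩ => ⟨h1, h3⟩⟩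
    calc S.absG (k + 1) x
        = ∫⁻ y in Ioc 0 x, ∫⁻ z in Ioi y, S.absG k z ∂S.μ.restrict (Ioc 0 1) :=
          setLIntegral_congr_fun measurableSet_Ioc htail
      _ ≤ ∫⁻ z in Ioc 0 1, ENNReal.ofReal z * S.absG k z ∂S.μ :=
          setLIntegral_Ioc_lintegral_Ioi_le _ (S.absG_monotone k).measurable x
      _ ≤ ∫⁻ z in Ioc 0 1, ENNReal.ofReal z * A ^ k ∂S.μ :=
          lintegral_mono fun z => by gcongr; exact ih z
      _ = A ^ (k + 1) := by
          rw [lintegral_mul_const _ ENNReal.measurable_ofReal, pow_succ']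

lemma absG_lt_top (k : ℕ) (x : ℝ) : S.absG k x < ∞ :=
  (S.absG_le k x).trans_lt (ENNReal.pow_lt_top S.int_fin)

lemma lintegral_Ioc_absG_lt_top (k : ℕ) {y : ℝ} (hy : 0 < y) :
    ∫⁻ z in Ioc y 1, S.absG k z ∂S.μ < ∞ :=
  calc ∫⁻ z in Ioc y 1, S.absG k z ∂S.μ
      ≤ ∫⁻ _ in Ioc y 1, (∫⁻ y in Ioc 0 1, ENNReal.ofReal y ∂S.μ) ^ k ∂S.μ :=
        lintegral_mono fun z => S.absG_le k z
    _ < ∞ := by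
        rw [setLIntegral_const]
        exact ENNReal.mul_lt_top (ENNReal.pow_lt_top S.int_fin) (S.measure_Ioc_lt_top hy)

lemma integral_toReal_absG (k : ℕ) (y : ℝ) :
    ∫ z in Ioc y 1, (S.absG k z).toReal ∂S.μ = (∫⁻ z in Ioc y 1, S.absG k z ∂S.μ).toReal :=
  integral_toReal (S.absG_monotone k).measurable.aemeasurable (ae_of_all _ (S.absG_lt_top k))

lemma integral_toReal_absG_succ (k : ℕ) (x : ℝ) :
    ∫ y in Ioc 0 x, (∫⁻ z in Ioc y 1, S.absG k z ∂S.μ).toReal = (S.absG (k + 1) x).toReal :=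
  integral_toReal (antitone_setLIntegral_Ioc _ _ _).measurable.aemeasurable
    ((ae_restrict_iff' measurableSet_Ioc).2
      (ae_of_all _ fun _ hy => S.lintegral_Ioc_absG_lt_top k hy.1))

lemma mtilde_eq {y : ℝ} (hy : y ∈ Ioc 0 1) :
    S.mtilde y = -(∫⁻ z in Ioc y 1, S.absG 0 z ∂S.μ).toReal := by
  have hm : S.m y ≤ S.m 1 := S.strict_mono.monotoneOn hy.1 (mem_Ioi.2 one_pos) hy.2
  simp only [absG, Pi.one_apply, setLIntegral_one, S.stieltjes y 1 hy.1 hy.2,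
    ENNReal.toReal_ofReal (sub_nonneg.2 hm), mtilde]
  ring

lemma G_eq (k : ℕ) {x : ℝ} (hx : x ∈ Ioc 0 1) :
    S.G (k + 1) x = (-1) ^ (k + 1) * (S.absG (k + 1) x).toReal := by
  induction k generalizing x with
  | zero =>
    simp only [G]
    rw [intervalIntegral.integral_of_le hx.1.le,
      setIntegral_congr_fun measurableSet_Ioc fun y hy => S.mtilde_eq ⟨hy.1, hy.2.trans hx.2⟩,
      integral_neg, integral_toReal_absG_succ]
    ring
  | succ k ih =>
    have hj : ∀ y ∈ Ioc 0 x, S.jInt (S.G (k + 1)) y =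
        (-1) ^ (k + 1) * (∫⁻ z in Ioc y 1, S.absG (k + 1) z ∂S.μ).toReal := by
      intro y hy
      rw [jInt, if_pos (hy.2.trans hx.2),
        setIntegral_congr_fun measurableSet_Ioc fun z hz => ih ⟨hy.1.trans hz.1, hz.2⟩,
        integral_const_mul, integral_toReal_absG]
    simp only [G]
    rw [intervalIntegral.integral_of_le hx.1.le, setIntegral_congr_fun measurableSet_Ioc hj,
      integral_const_mul, integral_toReal_absG_succ]
    ring

lemma neg_one_pow_mul_G (k : ℕ) {x : ℝ} (hx : x ∈ Ioc 0 1) :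
    (-1) ^ (k + 1) * S.G (k + 1) x = (S.absG (k + 1) x).toReal := by
  rw [S.G_eq k hx, ← mul_assoc, ← mul_pow, neg_one_mul, neg_neg, one_pow, one_mul]

lemma intGdm_succ (k : ℕ) : S.intGdm (k + 1) = ∫⁻ x in Ioc 0 1, S.absG (k + 1) x ∂S.μ :=
  setLIntegral_congr_fun measurableSet_Ioc fun x hx => by
    rw [S.neg_one_pow_mul_G k hx, ENNReal.ofReal_toReal (S.absG_lt_top _ _).ne]

lemma measure_Ioc_zero_one_eq_top (h : ¬BddBelow (S.m '' Ioc 0 1)) : S.μ (Ioc 0 1) = ∞ := by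
  contrapose! h
  refine ⟨S.m 1 - (S.μ (Ioc 0 1)).toReal, ?_⟩
  rintro _ ⟨y, hy, rfl⟩
  have : S.m 1 - S.m y ≤ (S.μ (Ioc 0 1)).toReal := by
    rw [← ENNReal.ofReal_le_iff_le_toReal h, ← S.stieltjes y 1 hy.1 hy.2]
    exact measure_mono (Ioc_subset_Ioc_left hy.1.le)
  linarith

lemma lintegral_absG_eq_top {j : ℕ} (hj : ((j + 1 : ℕ) : ℕ∞) ≤ S.dIdx) :
    ∫⁻ x in Ioc 0 1, S.absG j x ∂S.μ = ∞ := by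
  have hB : ¬BddBelow (S.m '' Ioc 0 1) := fun hB => by simp [dIdx, hB] at hj
  rw [dIdx, if_neg hB] at hj
  cases j with
  | zero => simpa [absG] using S.measure_Ioc_zero_one_eq_top hB
  | succ i =>
    rw [← intGdm_succ]
    by_contra hfin
    have := hj.trans (sInf_le ⟨i + 1, rfl, le_add_self, lt_top_iff_ne_top.2 hfin⟩)
    norm_cast at this
    omega

lemma toReal_lintegral_Ioc_absG_le (j : ℕ) {x : ℝ} (hx : 0 < x) :
    (∫⁻ z in Ioc x 1, S.absG j z ∂S.μ).toReal ≤ (S.absG (j + 1) x).toReal / x := by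
  have h : ENNReal.ofReal x * ∫⁻ z in Ioc x 1, S.absG j z ∂S.μ ≤ S.absG (j + 1) x :=
    ofReal_mul_le_setLIntegral_Ioc_of_antitone (antitone_setLIntegral_Ioc S.μ (S.absG j) 1) x
  replace h := ENNReal.toReal_mono (S.absG_lt_top _ _).ne h
  rwa [ENNReal.toReal_mul, ENNReal.toReal_ofReal hx.le, mul_comm, ← le_div_iff₀ hx] at h

end MString

theorem stmt7 (S : MString) (k : ℕ) (hk1 : 1 ≤ k) (hk2 : (k : ℕ∞) ≤ MString.dIdx S) :
    Tendsto (fun x => (-1 : ℝ) ^ k * MString.G S k x / x)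
      (nhdsWithin 0 (Set.Ioi 0)) atTop := by
  obtain ⟨j, rfl⟩ := Nat.exists_eq_add_of_le' hk1
  have htail : Tendsto (fun y => ∫⁻ z in Ioc y 1, S.absG j z ∂S.μ) (𝓝[>] 0) (𝓝 ∞) := by
    simpa only [S.lintegral_absG_eq_top hk2] using
      tendsto_setLIntegral_Ioc_nhdsGT S.μ (S.absG j) 0 1
  have htail_real :
      Tendsto (fun y => (∫⁻ z in Ioc y 1, S.absG j z ∂S.μ).toReal) (𝓝[>] 0) atTop := by
    refine ENNReal.tendsto_ofReal_nhds_top.1 (htail.congr' ?_)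
    filter_upwards [self_mem_nhdsWithin] with y hy
    exact (ENNReal.ofReal_toReal (S.lintegral_Ioc_absG_lt_top j hy).ne).symm
  refine tendsto_atTop_mono' _ ?_ htail_real
  filter_upwards [Ioc_mem_nhdsGT zero_lt_one] with x hx
  rw [S.neg_one_pow_mul_G j hx]
  exact S.toReal_lintegral_Ioc_absG_le j hx.1
end
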